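/- arXiv:2505.10082 — 2 statements merged into one kernel-verified Lean document; each statement's English description precedes it below -/
import Mathlib

section
/- For any K ∈ ℕ, the symmetric matrix M ∈ ℝ^{K×K} with entries M_{r,s} = rs/(r+s) for r, s ∈ {1,…,K} is positive definite. -/
/-!
With `p_r = (r + 1) X^r`, the entries are moments, `(r+1)(s+1)/((r+1)+(s+1)) = ∫₀¹ t p_r(t) p_s(t) dt`,
so the matrix is the Gram matrix of the `p_r` for the weight `t` on `[0, 1]`. Its quadratic form at
`x` is `∫₀¹ t (∑ x_r p_r(t))² dt`, which is positive as soon as the polynomial `∑ x_r p_r` is nonzero,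
i.e. as soon as `x ≠ 0`, since the `p_r` are linearly independent.
-/

open Polynomial Set Matrix MeasureTheory

theorem dotProduct_mulVec_integral_gram {ι : Type*} [Fintype ι] {a b : ℝ} {w : ℝ → ℝ}
    {f : ι → ℝ → ℝ} (hw : Continuous w) (hf : ∀ i, Continuous (f i)) (x : ι → ℝ) :
    x ⬝ᵥ (Matrix.of fun i j => ∫ t in a..b, w t * f i t * f j t) *ᵥ x =
      ∫ t in a..b, w t * (∑ i, x i * f i t) ^ 2 := by
  have hcont : ∀ i j, Continuous fun t => x i * (w t * f i t * f j t) * x j := by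
    fun_prop
  calc x ⬝ᵥ (Matrix.of fun i j => ∫ t in a..b, w t * f i t * f j t) *ᵥ x
      = ∑ i, ∑ j, ∫ t in a..b, x i * (w t * f i t * f j t) * x j := by
        simp only [dotProduct, mulVec, of_apply, Finset.mul_sum]
        refine Finset.sum_congr rfl fun i _ => Finset.sum_congr rfl fun j _ => ?_
        rw [intervalIntegral.integral_mul_const, intervalIntegral.integral_const_mul, mul_assoc]
    _ = ∫ t in a..b, ∑ i, ∑ j, x i * (w t * f i t * f j t) * x j := by
        rw [intervalIntegral.integral_finsetSum fun i _ =>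
          (continuous_finsetSum _ fun j _ => hcont i j).intervalIntegrable a b]
        refine Finset.sum_congr rfl fun i _ => ?_
        rw [intervalIntegral.integral_finsetSum fun j _ => (hcont i j).intervalIntegrable a b]
    _ = ∫ t in a..b, w t * (∑ i, x i * f i t) ^ 2 := by
        congr 1 with t
        rw [sq, Finset.sum_mul_sum, Finset.mul_sum]
        refine Finset.sum_congr rfl fun i _ => ?_
        rw [Finset.mul_sum]
        exact Finset.sum_congr rfl fun j _ => by ring

theorem integral_mul_eval_sq_pos {a b : ℝ} (hab : a < b) {w : ℝ → ℝ}
    (hw : ContinuousOn w (Icc a b)) (hw_pos : ∀ t ∈ Ioc a b, 0 < w t) {p : ℝ[X]} (hp : p ≠ 0) :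
    0 < ∫ t in a..b, w t * p.eval t ^ 2 := by
  obtain ⟨c, hc, hc_root⟩ := (Ioo_infinite hab).exists_notMem_finset p.roots.toFinset
  have hpc : p.eval c ≠ 0 := fun h => hc_root (by simpa [hp] using h)
  refine intervalIntegral.integral_pos hab (hw.mul (p.continuousOn_aeval.pow 2)) ?_
    ⟨c, Ioo_subset_Icc_self hc, mul_pos (hw_pos c (Ioo_subset_Ioc_self hc)) (by positivity)⟩
  exact fun t ht => mul_nonneg (hw_pos t ht).le (sq_nonneg _)

theorem posDef_integral_gram {ι : Type*} [Fintype ι] {a b : ℝ} (hab : a < b) {w : ℝ → ℝ}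
    (hw : Continuous w) (hw_pos : ∀ t ∈ Ioc a b, 0 < w t) {p : ι → ℝ[X]}
    (hp : LinearIndependent ℝ p) :
    (Matrix.of fun i j => ∫ t in a..b, w t * (p i).eval t * (p j).eval t).PosDef := by
  refine posDef_iff_dotProduct_mulVec.mpr ⟨?_, fun x hx => ?_⟩
  · ext i j
    simp only [conjTranspose_apply, of_apply, star_trivial, mul_right_comm]
  · have hsum : ∑ i, x i • p i ≠ 0 := fun h => hx (funext (Fintype.linearIndependent_iff.mp hp x h))
    rw [star_trivial, dotProduct_mulVec_integral_gram hw (fun i => (p i).continuous)]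
    simpa [eval_finsetSum] using integral_mul_eval_sq_pos hab hw.continuousOn hw_pos hsum

theorem linearIndependent_monomial_succ (K : ℕ) :
    LinearIndependent ℝ fun r : Fin K => monomial (r : ℕ) ((r : ℝ) + 1) := by
  have h := ((basisMonomials ℝ).linearIndependent.comp _ Fin.val_injective).units_smul
    fun r : Fin K => Units.mk0 ((r : ℝ) + 1) (by positivity)
  convert h using 1
  ext r : 1
  simp [smul_monomial]

theorem integral_mul_monomial_succ (r s : ℕ) :
    ∫ t in (0 : ℝ)..1, t * (monomial r ((r : ℝ) + 1)).eval t * (monomial s ((s : ℝ) + 1)).eval t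
      = ((r : ℝ) + 1) * ((s : ℝ) + 1) / (((r : ℝ) + 1) + ((s : ℝ) + 1)) := by
  have h : ∀ t : ℝ, t * (monomial r ((r : ℝ) + 1)).eval t * (monomial s ((s : ℝ) + 1)).eval t
      = ((r : ℝ) + 1) * ((s : ℝ) + 1) * t ^ (r + s + 1) := fun t => by simp only [eval_monomial]; ring
  simp only [h, intervalIntegral.integral_const_mul, integral_pow]
  push_cast
  field_simp
  ring

theorem stmt_6 (K : ℕ) :
    Matrix.PosDef (Matrix.of fun r s : Fin K =>
      (((r : ℝ) + 1) * ((s : ℝ) + 1)) / (((r : ℝ) + 1) + ((s : ℝ) + 1))) := by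
  simp only [← integral_mul_monomial_succ]
  exact posDef_integral_gram zero_lt_one continuous_id (fun t ht => ht.1)
    (linearIndependent_monomial_succ K)
end

section
/- The function φ(α) = 1 − α²/2 − (1/α − α/2)²/2 on (0, √2) attains its maximum value 2/(3+√5) at α² = 2/√5. -/
theorem stmt_19 (φ : ℝ → ℝ)
    (hφ : ∀ α : ℝ, α ∈ Set.Ioo (0 : ℝ) (Real.sqrt 2) →
      φ α = 1 - α ^ 2 / 2 - (1 / α - α / 2) ^ 2 / 2)
    (a : ℝ) (ha : a = Real.sqrt (2 / Real.sqrt 5)) :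
    a ∈ Set.Ioo (0 : ℝ) (Real.sqrt 2) ∧
    φ a = 2 / (3 + Real.sqrt 5) ∧
    ∀ α ∈ Set.Ioo (0 : ℝ) (Real.sqrt 2), φ α ≤ 2 / (3 + Real.sqrt 5) := by
  have hs5 : (Real.sqrt 5) ^ 2 = 5 := Real.sq_sqrt (by norm_num)
  have hs5pos : (0:ℝ) < Real.sqrt 5 := Real.sqrt_pos.mpr (by norm_num)
  have hs5lt : Real.sqrt 5 < 3 := by nlinarith
  have hs5gt : 1 < Real.sqrt 5 := by nlinarith
  have hqpos : (0:ℝ) < 2 / Real.sqrt 5 := by positivity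
  have hapos : 0 < a := ha ▸ Real.sqrt_pos.mpr hqpos
  have ha2 : a ^ 2 = 2 / Real.sqrt 5 := by
    rw [ha, Real.sq_sqrt hqpos.le]
  have hmem : a ∈ Set.Ioo (0 : ℝ) (Real.sqrt 2) := by
    refine ⟨hapos, ?_⟩
    rw [ha]
    apply Real.sqrt_lt_sqrt hqpos.le
    rw [div_lt_iff₀ hs5pos]; nlinarith
  have hhalf : 2 / (3 + Real.sqrt 5) = (3 - Real.sqrt 5) / 2 := by
    rw [div_eq_div_iff (by positivity) (by norm_num)]
    nlinarith
  refine ⟨hmem, ?_, ?_⟩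
  · rw [hφ a hmem, hhalf]
    have hane : a ≠ 0 := ne_of_gt hapos
    have hexp : (1 / a - a / 2) ^ 2 = 1 / a ^ 2 - 1 + a ^ 2 / 4 := by
      field_simp; ring
    have hinv : 1 / a ^ 2 = Real.sqrt 5 / 2 := by
      rw [ha2]; field_simp
    rw [hexp, hinv, ha2]
    field_simp
    ring_nf
    nlinarith
  · intro α hα
    rw [hφ α hα, hhalf]
    have hαpos : 0 < α := hα.1
    have hαne : α ≠ 0 := ne_of_gt hαpos
    have hexp : (1 / α - α / 2) ^ 2 = 1 / α ^ 2 - 1 + α ^ 2 / 4 := by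
      field_simp; ring
    rw [hexp]
    have h2 : 0 < α ^ 2 := by positivity
    have key : Real.sqrt 5 - 5 * α ^ 2 / 4 ≤ 1 / α ^ 2 := by
      rw [le_div_iff₀ h2]
      have h4 : (Real.sqrt 5) ^ 2 * α ^ 4 = 5 * α ^ 4 := by rw [hs5]
      nlinarith [sq_nonneg (Real.sqrt 5 * α ^ 2 - 2), h4]
    linarith
end
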